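/- For λ a positive integer and m ≥ 0, the Boole polynomials of the second kind satisfy B̂l_m(x|λ) = ∑_{l=0}^{m} s(m,l) (-1)^l (λ^l/2) E_l(-x/λ). -/

import Mathlib

/-!
Substituting `t ↦ log (1 + t)` turns `e^{ct}` into `(1 + t)^c`, and acts on exponential
generating functions through the signed Stirling numbers of the first kind, because
`log (1 + t)^k / k! = ∑ₙ s(n,k) tⁿ/n!`: by induction on `k`, since `(1 + t) d/dt` maps both sides
for `k + 1` to those for `k`, and both vanish at `t = 0`.

Rescale Euler's relation at `y = -x/λ` by `t ↦ -λt` and multiply it by `e^{λt}`: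
`(∑ (-λ)^l E_l(y) t^l/l!) (1 + e^{λt}) = 2 e^{(λ+x)t}`. After the substitution this is twice
the defining relation `(∑ B̂l_n tⁿ/n!) (1 + (1+t)^λ) = (1+t)^{λ+x}`, and `1 + (1+t)^λ` cancels.
-/

open Finset PowerSeries

/-- Stirling numbers of the second kind. -/
def stirling2 : ℕ → ℕ → ℕ
  | 0, 0 => 1
  | 0, _ + 1 => 0
  | _ + 1, 0 => 0
  | n + 1, k + 1 => (k + 1) * stirling2 n (k + 1) + stirling2 n k

/-- Unsigned Stirling numbers of the first kind. -/
def stirling1 : ℕ → ℕ → ℕ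
  | 0, 0 => 1
  | 0, _ + 1 => 0
  | _ + 1, 0 => 0
  | n + 1, k + 1 => n * stirling1 n (k + 1) + stirling1 n k

/-- Signed Stirling numbers of the first kind. -/
def s1 (n l : ℕ) : ℚ := (-1) ^ (n - l) * (stirling1 n l : ℚ)

/-- The exponential generating function `∑ a n * t^n / n!` as a power series over `ℚ`. -/
noncomputable def egf (a : ℕ → ℚ) : PowerSeries ℚ :=
  PowerSeries.mk fun n => a n / (Nat.factorial n : ℚ)

/-- The binomial series `(1+t)^x = ∑ (x)_n t^n / n!` for `x : ℚ`. -/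
noncomputable def onePlusTPow (x : ℚ) : PowerSeries ℚ :=
  egf fun n => ∏ i ∈ Finset.range n, (x - i)

/-- `e^{xt}` as a power series over `ℚ`. -/
noncomputable def expXT (x : ℚ) : PowerSeries ℚ := egf fun n => x ^ n

open Nat

lemma stirling1_eq_stirlingFirst : ∀ n k, stirling1 n k = stirlingFirst n k
  | 0, 0 | 0, _ + 1 | _ + 1, 0 => rfl
  | n + 1, k + 1 => by
    rw [stirling1, stirlingFirst_succ_succ, stirling1_eq_stirlingFirst n (k + 1),
      stirling1_eq_stirlingFirst n k]

lemma s1_eq_zero_of_lt {n k : ℕ} (h : n < k) : s1 n k = 0 := by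
  simp [s1, stirling1_eq_stirlingFirst, stirlingFirst_eq_zero_of_lt h]

lemma s1_zero_right (n : ℕ) : s1 n 0 = if n = 0 then 1 else 0 := by
  cases n <;> simp [s1, stirling1_eq_stirlingFirst]

lemma s1_succ_succ (n k : ℕ) : s1 (n + 1) (k + 1) = s1 n k - n * s1 n (k + 1) := by
  rcases lt_or_ge n k with h | h
  · simp [s1_eq_zero_of_lt h, s1_eq_zero_of_lt (Nat.succ_lt_succ h),
      s1_eq_zero_of_lt (h.trans (Nat.lt_succ_self k))]
  · obtain ⟨j, rfl⟩ := Nat.exists_eq_add_of_le h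
    simp only [s1, stirling1_eq_stirlingFirst, stirlingFirst_succ_succ,
      show k + j + 1 - (k + 1) = j by omega, show k + j - k = j by omega]
    rcases j with _ | j
    · simp [stirlingFirst_eq_zero_of_lt (Nat.lt_succ_self k)]
    · rw [show k + (j + 1) - (k + 1) = j by omega]
      push_cast
      ring

lemma prod_range_sub_eq_sum_s1_mul_pow (c : ℚ) (n : ℕ) :
    ∏ i ∈ range n, (c - i) = ∑ k ∈ range (n + 1), s1 n k * c ^ k := by
  induction n with
  | zero => simp [s1_zero_right]
  | succ n ih =>
    have hshift : ∑ k ∈ range (n + 1), s1 n (k + 1) * c ^ (k + 1)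
        = ∑ k ∈ range (n + 1), s1 n k * c ^ k - s1 n 0 := by
      have h := sum_range_succ' (fun k => s1 n k * c ^ k) (n + 1)
      rw [sum_range_succ, s1_eq_zero_of_lt n.lt_succ_self, zero_mul, add_zero] at h
      linear_combination -h
    have hn : (n : ℚ) * s1 n 0 = 0 := by
      rcases n with _ | n <;> simp [s1_zero_right]
    rw [prod_range_succ, ih, sum_range_succ' _ (n + 1), s1_zero_right, if_neg n.succ_ne_zero]
    simp only [s1_succ_succ, sub_mul, sum_sub_distrib, mul_assoc, ← mul_sum, hshift]
    simp only [pow_succ, ← mul_assoc, ← sum_mul]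
    linear_combination -hn

lemma coeff_egf (a : ℕ → ℚ) (n : ℕ) : coeff n (egf a) = a n / n ! := coeff_mk n _

lemma expXT_eq_rescale_exp (c : ℚ) : expXT c = rescale c (exp ℚ) := by
  ext n
  simp [expXT, coeff_egf, coeff_rescale, coeff_exp, div_eq_mul_inv]

lemma expXT_add (c d : ℚ) : expXT (c + d) = expXT c * expXT d := by
  simp only [expXT_eq_rescale_exp, exp_mul_exp_eq_exp_add]

lemma expXT_zero : expXT 0 = 1 := by
  simp [expXT_eq_rescale_exp, rescale_zero, constantCoeff_exp]

lemma expXT_one : expXT 1 = exp ℚ := by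
  simp [expXT_eq_rescale_exp, rescale_one]

lemma rescale_egf (c : ℚ) (a : ℕ → ℚ) : rescale c (egf a) = egf fun n => c ^ n * a n := by
  ext n
  rw [coeff_rescale, coeff_egf, coeff_egf, mul_div_assoc]

lemma rescale_expXT (c y : ℚ) : rescale c (expXT y) = expXT (c * y) := by
  rw [expXT_eq_rescale_exp, expXT_eq_rescale_exp, rescale_rescale, mul_comm]

lemma onePlusTPow_one : onePlusTPow 1 = 1 + X := by
  ext n
  rw [onePlusTPow, coeff_egf]
  rcases n with _ | _ | n
  · simp
  · simp
  · rw [prod_eq_zero (i := 1) (by simp) (by simp)]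
    simp [coeff_X, coeff_one]

noncomputable def stirling1Egf (k : ℕ) : ℚ⟦X⟧ := egf fun n => s1 n k

lemma stirling1Egf_zero : stirling1Egf 0 = 1 := by
  ext n
  rcases n with _ | n <;> simp [stirling1Egf, coeff_egf, s1_zero_right, coeff_one]

lemma constantCoeff_stirling1Egf_succ (k : ℕ) : constantCoeff (stirling1Egf (k + 1)) = 0 := by
  rw [← coeff_zero_eq_constantCoeff_apply, stirling1Egf, coeff_egf,
    s1_eq_zero_of_lt k.succ_pos, zero_div]

lemma one_add_X_mul_derivative_stirling1Egf_succ (k : ℕ) :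
    (1 + X) * d⁄dX ℚ (stirling1Egf (k + 1)) = stirling1Egf k := by
  ext n
  rw [add_mul, one_mul, map_add, coeff_derivative]
  rcases n with _ | n
  · simp [stirling1Egf, coeff_egf, s1_succ_succ]
  · rw [coeff_succ_X_mul, coeff_derivative]
    simp only [stirling1Egf, coeff_egf, s1_succ_succ, cast_add, cast_one, factorial_succ, cast_mul]
    field_simp
    ring

lemma one_add_X_ne_zero : (1 + X : ℚ⟦X⟧) ≠ 0 := by
  intro h
  simpa using congrArg constantCoeff h

lemma stirling1Egf_one_pow (k : ℕ) : stirling1Egf 1 ^ k = k ! • stirling1Egf k := by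
  induction k with
  | zero => simp [stirling1Egf_zero]
  | succ k ih =>
    apply derivative.ext
    · apply mul_left_cancel₀ one_add_X_ne_zero
      calc (1 + X) * d⁄dX ℚ (stirling1Egf 1 ^ (k + 1))
          = ((k + 1 : ℕ) : ℚ⟦X⟧) * stirling1Egf 1 ^ k
              * ((1 + X) * d⁄dX ℚ (stirling1Egf (0 + 1))) := by
            rw [derivative_pow, Nat.add_sub_cancel]; ring
        _ = (1 + X) * d⁄dX ℚ ((k + 1)! • stirling1Egf (k + 1)) := by
            rw [map_nsmul, mul_smul_comm, one_add_X_mul_derivative_stirling1Egf_succ,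
              one_add_X_mul_derivative_stirling1Egf_succ, stirling1Egf_zero, ih, factorial_succ]
            simp only [nsmul_eq_mul, Nat.cast_mul]
            ring
    · simp [constantCoeff_stirling1Egf_succ]

lemma stirling1Egf_one : stirling1Egf 1 = log ℚ := by
  ext n
  rcases n with _ | n
  · simp [stirling1Egf, coeff_egf, s1_eq_zero_of_lt]
  · rw [stirling1Egf, coeff_egf, coeff_log, if_neg n.succ_ne_zero, s1, stirling1_eq_stirlingFirst,
      stirlingFirst_one_right, Nat.add_sub_cancel, factorial_succ]
    push_cast
    field_simp
    ring

noncomputable def substLog : ℚ⟦X⟧ →ₐ[ℚ] ℚ⟦X⟧ := substAlgHom HasSubst.log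

lemma substLog_egf (a : ℕ → ℚ) :
    substLog (egf a) = egf fun n => ∑ k ∈ range (n + 1), s1 n k * a k := by
  have hcoeff (n k : ℕ) : coeff k (egf a) • coeff n (log ℚ ^ k) = s1 n k * a k / n ! := by
    rw [← stirling1Egf_one, stirling1Egf_one_pow, map_nsmul, stirling1Egf, coeff_egf, coeff_egf,
      smul_eq_mul, nsmul_eq_mul]
    field_simp
  ext n
  rw [substLog, coe_substAlgHom, coeff_subst' HasSubst.log, coeff_egf, sum_div,
    finsum_eq_sum_of_support_subset (s := range (n + 1))]
  · exact sum_congr rfl fun k _ => hcoeff n k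
  · intro k hk
    rw [Function.mem_support, hcoeff] at hk
    rw [coe_range, Set.mem_Iio]
    by_contra h
    exact hk (by rw [s1_eq_zero_of_lt (by omega), zero_mul, zero_div])

lemma substLog_expXT (c : ℚ) : substLog (expXT c) = onePlusTPow c := by
  simp only [expXT, substLog_egf, ← prod_range_sub_eq_sum_s1_mul_pow, onePlusTPow]

lemma substLog_exp : substLog (exp ℚ) = 1 + X := by
  rw [← expXT_one, substLog_expXT, onePlusTPow_one]

lemma egf_mul_one_add_exp_pow_of_euler (L : ℕ) (hL : 0 < L) (x : ℚ) (e : ℕ → ℚ)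
    (he : egf e * (exp ℚ + 1) = 2 * expXT (-x / L)) :
    egf (fun n => (-L : ℚ) ^ n * e n) * (1 + exp ℚ ^ L) = 2 * expXT (L + x) := by
  have hx : -(L : ℚ) * (-x / L) = x := by
    have : (L : ℚ) ≠ 0 := Nat.cast_ne_zero.2 hL.ne'
    field_simp
  have hrescaled : egf (fun n => (-L : ℚ) ^ n * e n) * (expXT (-L) + 1) = 2 * expXT x := by
    have h := congrArg (rescale (-(L : ℚ))) he
    rwa [map_mul, map_add, map_one, map_mul, map_ofNat, rescale_egf, ← expXT_one, rescale_expXT,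
      rescale_expXT, mul_one, hx] at h
  have hinv : expXT (-L) * expXT L = 1 := by rw [← expXT_add, neg_add_cancel, expXT_zero]
  rw [exp_pow_eq_rescale_exp, ← expXT_eq_rescale_exp, expXT_add]
  linear_combination expXT L * hrescaled - egf (fun n => (-L : ℚ) ^ n * e n) * hinv

theorem boole2nd_eq_sum_stirling1_euler (L : ℕ) (hL : 0 < L) (x : ℚ)
    (Bh : ℕ → ℚ) (E : ℕ → ℚ → ℚ)
    (hBh : egf Bh * (1 + (1 + PowerSeries.X) ^ L) = onePlusTPow ((L : ℚ) + x))
    (hE : ∀ y : ℚ, egf (fun m => E m y) * (PowerSeries.exp ℚ + 1) = 2 * expXT y)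
    (m : ℕ) :
    Bh m = ∑ l ∈ Finset.range (m + 1),
      s1 m l * (-1) ^ l * ((L : ℚ) ^ l / 2) * E l (-x / L) := by
  have hBoole := congrArg substLog (egf_mul_one_add_exp_pow_of_euler L hL x _ (hE (-x / L)))
  rw [map_mul, map_add, map_one, map_pow, map_mul, map_ofNat, substLog_egf,
    substLog_exp, substLog_expXT, ← hBh, ← mul_assoc] at hBoole
  have hne : (1 + (1 + X) ^ L : ℚ⟦X⟧) ≠ 0 := by
    intro h
    simpa using congrArg constantCoeff h
  have h := congrArg (coeff m) (mul_right_cancel₀ hne hBoole)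
  rw [coeff_egf, ← map_ofNat C 2, coeff_C_mul, coeff_egf, mul_div_assoc',
    div_left_inj' (by positivity)] at h
  calc Bh m = (∑ k ∈ range (m + 1), s1 m k * ((-L) ^ k * E k (-x / L))) / 2 := by rw [h]; ring
    _ = _ := by
      rw [sum_div]
      exact sum_congr rfl fun l _ => by rw [neg_pow]; ring
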